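/- In ℝ with D := (−∞,0], f(x) := 0, c(x) := x, and g(x) := x for x ≤ 0, g(x) := 1 − x for x > 0, the point x* = 0 is the global maximizer of g over the feasible set, the limiting subdifferential satisfies ∂g(0) = [1,∞), and x* = 0 is not M-stationary for the problem: minimize f(x)+g(x) subject to c(x) ∈ D; i.e., there is no y* ∈ N^lim_D(0) = [0,∞) with 0 ∈ ∂g(0) + y*. -/

import Mathlib

open Metric Filter Topology
open scoped RealInnerProductSpace

noncomputable section

variable {E : Type*} [NormedAddCommGroup E] [InnerProductSpace ℝ E]

/-- The (possibly set-valued) metric projection onto `D`. -/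
def projSet (D : Set E) (v : E) : Set E :=
  {z | z ∈ D ∧ ‖v - z‖ = Metric.infDist v D}

/-- The limiting (Mordukhovich) normal cone to `D` at `z`,
`N^lim_D(z) = limsup_{v → z} cone (v - proj_D v)`, empty outside `D`. -/
def limNormalCone (D : Set E) (z : E) : Set E :=
  {w | z ∈ D ∧ ∃ (v : ℕ → E) (u : ℕ → E),
      Filter.Tendsto v Filter.atTop (nhds z) ∧
      Filter.Tendsto u Filter.atTop (nhds w) ∧
      ∀ k, ∃ (lam : ℝ) (p : E), 0 ≤ lam ∧ p ∈ projSet D (v k) ∧ u k = lam • (v k - p)}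

/-- The regular (Fréchet) subdifferential of `h : E → ℝ ∪ {∞}` at `x`. -/
def RegSubdiff (h : E → WithTop ℝ) (x : E) : Set E :=
  {v | ∃ hx : ℝ, h x = (hx : WithTop ℝ) ∧
    ∀ ε : ℝ, 0 < ε → ∀ᶠ y in nhds x,
      ((hx + (inner ℝ v (y - x) : ℝ) - ε * ‖y - x‖ : ℝ) : WithTop ℝ) ≤ h y}

/-- The limiting (Mordukhovich) subdifferential of `h` at `x`:
limits of regular subgradients along `h`-attentive sequences. -/
def LimSubdiff (h : E → WithTop ℝ) (x : E) : Set E :=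
  {v | ∃ (xs : ℕ → E) (vs : ℕ → E) (hs : ℕ → ℝ) (hx : ℝ),
      h x = (hx : WithTop ℝ) ∧ (∀ k, h (xs k) = ((hs k : ℝ) : WithTop ℝ)) ∧
      Filter.Tendsto xs Filter.atTop (nhds x) ∧
      Filter.Tendsto hs Filter.atTop (nhds hx) ∧
      Filter.Tendsto vs Filter.atTop (nhds v) ∧
      ∀ k, vs k ∈ RegSubdiff h (xs k)}

/-- The (possibly set-valued) proximal mapping of `h` with stepsize `γ`. -/
def proxSet (γ : ℝ) (h : E → WithTop ℝ) (x : E) : Set E :=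
  {z | ∀ w : E, h z + ((‖z - x‖ ^ 2 / (2 * γ) : ℝ) : WithTop ℝ)
      ≤ h w + ((‖w - x‖ ^ 2 / (2 * γ) : ℝ) : WithTop ℝ)}

/-! `g` jumps *up* at `0`, so a regular subgradient at any `x ≤ 0` is at least the left slope `1`,
while points `x > 0` have `g x` near `1` and are never reached by `g`-attentive sequences
converging to `0`. Hence `∂g(0) = [1, ∞)`, which cannot meet `-N^lim_D(0) = (-∞, 0]`. -/

open Set

section Subdifferentials

variable {h : E → WithTop ℝ} {x v : E} {a : ℝ}

theorem mem_regSubdiff_of_eventually_le (hx : h x = a)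
    (hle : ∀ᶠ y in 𝓝 x, ((a + inner ℝ v (y - x) : ℝ) : WithTop ℝ) ≤ h y) : v ∈ RegSubdiff h x :=
  ⟨a, hx, fun ε hε => hle.mono fun _ hy =>
    (WithTop.coe_le_coe.2 (sub_le_self _ (by positivity))).trans hy⟩

theorem regSubdiff_subset_limSubdiff : RegSubdiff h x ⊆ LimSubdiff h x := fun v hv =>
  let ⟨a, ha, _⟩ := hv
  ⟨fun _ => x, fun _ => v, fun _ => a, a, ha, fun _ => ha, tendsto_const_nhds,
    tendsto_const_nhds, tendsto_const_nhds, fun _ => hv⟩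

/-- Attentive convergence `xₖ → x`, `h xₖ → h x` is convergence of `(xₖ, h xₖ)` in `E × ℝ`. -/
theorem limSubdiff_subset_of_eventually {C : Set E} (hC : IsClosed C) (hx : h x = a)
    (hnear : ∀ᶠ p : E × ℝ in 𝓝 (x, a), h p.1 = p.2 → RegSubdiff h p.1 ⊆ C) :
    LimSubdiff h x ⊆ C := by
  rintro v ⟨xs, vs, hs, b, hb, hxs, hxs_lim, hs_lim, hvs_lim, hreg⟩
  obtain rfl : b = a := WithTop.coe_injective (hb.symm.trans hx)
  exact hC.mem_of_tendsto hvs_lim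
    (((hxs_lim.prodMk_nhds hs_lim).eventually hnear).mono fun k hk => hk (hxs k) (hreg k))

end Subdifferentials

theorem le_of_mem_regSubdiff_of_eventually_le_left {h : ℝ → WithTop ℝ} {x v s a : ℝ}
    (hx : h x = a) (hleft : ∀ᶠ y in 𝓝[<] x, h y ≤ ((a + s * (y - x) : ℝ) : WithTop ℝ))
    (hv : v ∈ RegSubdiff h x) : s ≤ v := by
  obtain ⟨b, hb, hreg⟩ := hv
  obtain rfl : b = a := WithTop.coe_injective (hb.symm.trans hx)
  refine le_of_forall_pos_le_add fun ε hε => ?_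
  obtain ⟨y, ⟨hy_left, hy_reg⟩, hy_lt⟩ :=
    ((hleft.and (nhdsWithin_le_nhds (hreg ε hε))).and self_mem_nhdsWithin).exists
  have hyx : 0 < x - y := sub_pos.2 hy_lt
  have key : b + v * (y - x) - ε * (x - y) ≤ b + s * (y - x) := by
    have := WithTop.coe_le_coe.1 (hy_reg.trans hy_left)
    rwa [Real.inner_apply, Real.norm_eq_abs, abs_sub_comm, abs_of_pos hyx] at this
  nlinarith

theorem infDist_Iic_of_le {a v : ℝ} (h : a ≤ v) : infDist v (Iic a) = v - a := by
  refine le_antisymm ?_ ?_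
  · simpa [Real.dist_eq, abs_of_nonneg (sub_nonneg.2 h)] using
      infDist_le_dist_of_mem (x := v) (mem_Iic.2 (le_refl a))
  · refine (le_infDist nonempty_Iic).2 fun y hy => ?_
    rw [Real.dist_eq]
    exact (sub_le_sub_left hy v).trans (le_abs_self _)

theorem sub_nonneg_of_mem_projSet_Iic {a v p : ℝ} (hp : p ∈ projSet (Iic a) v) : 0 ≤ v - p := by
  obtain ⟨hpa, hpv⟩ := hp
  rcases le_or_gt v a with hva | hav
  · rw [infDist_zero_of_mem (mem_Iic.2 hva), norm_eq_zero] at hpv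
    exact hpv.ge
  · exact sub_nonneg.2 ((mem_Iic.1 hpa).trans hav.le)

theorem mem_projSet_Iic_of_le {a v : ℝ} (h : a ≤ v) : a ∈ projSet (Iic a) v :=
  ⟨mem_Iic.2 le_rfl, by rw [infDist_Iic_of_le h, Real.norm_eq_abs, abs_of_nonneg (sub_nonneg.2 h)]⟩

theorem limNormalCone_Iic (a : ℝ) : limNormalCone (Iic a) a = {y | 0 ≤ y} := by
  ext w
  constructor
  · rintro ⟨-, v, u, -, hu, hproj⟩
    refine ge_of_tendsto hu (Eventually.of_forall fun k => ?_)
    obtain ⟨lam, p, hlam, hp, hu_eq⟩ := hproj k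
    rw [hu_eq, smul_eq_mul]
    exact mul_nonneg hlam (sub_nonneg_of_mem_projSet_Iic hp)
  · intro hw
    have hv : Tendsto (fun k : ℕ => a + 1 / ((k : ℝ) + 1)) atTop (𝓝 a) := by
      simpa using (tendsto_const_nhds (x := a)).add tendsto_one_div_add_atTop_nhds_zero_nat
    refine ⟨mem_Iic.2 le_rfl, _, fun _ => w, hv, tendsto_const_nhds, fun k => ?_⟩
    have hk : (0 : ℝ) < (k : ℝ) + 1 := by positivity
    refine ⟨w * ((k : ℝ) + 1), a, mul_nonneg hw hk.le,
      mem_projSet_Iic_of_le (le_add_of_nonneg_right (by positivity)), ?_⟩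
    simp only [add_sub_cancel_left, smul_eq_mul]
    field_simp

section JumpFn

def jumpFn : ℝ → WithTop ℝ := fun x =>
  if x ≤ 0 then ((x : ℝ) : WithTop ℝ) else ((1 - x : ℝ) : WithTop ℝ)

variable {x v : ℝ}

theorem jumpFn_of_nonpos (hx : x ≤ 0) : jumpFn x = x := if_pos hx

theorem jumpFn_of_pos (hx : 0 < x) : jumpFn x = ((1 - x : ℝ) : WithTop ℝ) := if_neg hx.not_ge

theorem one_le_of_mem_regSubdiff_jumpFn (hx : x ≤ 0) (hv : v ∈ RegSubdiff jumpFn x) : 1 ≤ v := by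
  refine le_of_mem_regSubdiff_of_eventually_le_left (jumpFn_of_nonpos hx)
    (eventually_nhdsWithin_of_forall fun y hy => ?_) hv
  rw [jumpFn_of_nonpos ((le_of_lt hy).trans hx)]
  exact WithTop.coe_le_coe.2 (by linarith)

theorem mem_regSubdiff_jumpFn_zero (hv : 1 ≤ v) : v ∈ RegSubdiff jumpFn 0 := by
  refine mem_regSubdiff_of_eventually_le (jumpFn_of_nonpos le_rfl)
    ((eventually_lt_nhds (by positivity : (0 : ℝ) < 1 / (v + 1))).mono fun y hy => ?_)
  rw [Real.inner_apply, sub_zero, zero_add]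
  rcases le_or_gt y 0 with hy0 | hy0
  · rw [jumpFn_of_nonpos hy0]
    exact WithTop.coe_le_coe.2 (by nlinarith)
  · rw [jumpFn_of_pos hy0]
    have : (v + 1) * y < 1 := by rwa [lt_div_iff₀ (by positivity), mul_comm] at hy
    exact WithTop.coe_le_coe.2 (by linarith)

theorem limSubdiff_jumpFn_zero : LimSubdiff jumpFn 0 = {v | 1 ≤ v} := by
  refine Subset.antisymm (limSubdiff_subset_of_eventually isClosed_Ici
    (jumpFn_of_nonpos le_rfl) ?_) fun v hv => regSubdiff_subset_limSubdiff
    (mem_regSubdiff_jumpFn_zero hv)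
  filter_upwards [(eventually_lt_nhds one_half_pos).prod_nhds (eventually_lt_nhds one_half_pos)]
    with ⟨y, b⟩ ⟨hy, hb⟩ hgraph v hv
  have hy0 : y ≤ 0 := by
    by_contra! hy0
    rw [jumpFn_of_pos hy0] at hgraph
    linarith [WithTop.coe_injective hgraph]
  exact one_le_of_mem_regSubdiff_jumpFn hy0 hv

end JumpFn

theorem stmt10 (g : ℝ → WithTop ℝ)
    (hg : g = fun x : ℝ => if x ≤ 0 then ((x : ℝ) : WithTop ℝ) else ((1 - x : ℝ) : WithTop ℝ)) :
    (∀ x ∈ Set.Iic (0 : ℝ), g x ≤ g 0) ∧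
    LimSubdiff g 0 = {v : ℝ | 1 ≤ v} ∧
    limNormalCone (Set.Iic (0 : ℝ)) 0 = {y : ℝ | 0 ≤ y} ∧
    ¬ ∃ ystar : ℝ, ystar ∈ limNormalCone (Set.Iic (0 : ℝ)) 0 ∧ -ystar ∈ LimSubdiff g 0 := by
  obtain rfl : g = jumpFn := hg
  refine ⟨fun x hx => ?_, limSubdiff_jumpFn_zero, limNormalCone_Iic 0, ?_⟩
  · rw [jumpFn_of_nonpos hx, jumpFn_of_nonpos le_rfl]
    exact WithTop.coe_le_coe.2 hx
  · rintro ⟨y, hy_normal, hy_subdiff⟩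
    have hy_nonneg : 0 ≤ y := by rwa [limNormalCone_Iic] at hy_normal
    have hy_le : 1 ≤ -y := by rwa [limSubdiff_jumpFn_zero] at hy_subdiff
    linarith
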